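/- Let S be a cancellative semigroup which admits at least one left-Følner net (equivalently, S is a cancellative left-amenable semigroup). Let h be a real-valued function on the set of finite subsets of S such that: (H1) h is subadditive, i.e. h(A ∪ B) ≤ h(A) + h(B) for all finite A, B ⊆ S; (H2) h is right-subinvariant, i.e. h(As) ≤ h(A) for all s ∈ S and all finite A ⊆ S; (H3) there exists a real number M ≥ 0 with h({s}) ≤ M for all s ∈ S. Then there exists a real number λ ≥ 0, depending only on h, such that for every left-Følner net (F_i)_{i∈I} of S, the net (h(F_i)/|F_i|)_{i∈I} converges to λ. -/

import Mathlib

open Filter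

/-- A left-Følner net for a semigroup `S`: a net, indexed by a nonempty directed set `I`,
of nonempty finite subsets `F i` of `S` such that `|s F_i \ F_i| / |F_i| → 0`
for every `s ∈ S`. -/
structure LeftFolnerNet.{u, v} (S : Type u) [Mul S] [DecidableEq S] :
    Type (max u (v + 1)) where
  I : Type v
  [pre : Preorder I]
  [ne : Nonempty I]
  dir : IsDirected I (· ≤ ·)
  F : I → Finset S
  nonempty : ∀ i, (F i).Nonempty
  folner : ∀ s : S,
    Filter.Tendsto (fun i => ((((F i).image (s * ·)) \ F i).card : ℝ) / ((F i).card : ℝ))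
      Filter.atTop (nhds 0)

attribute [instance] LeftFolnerNet.pre LeftFolnerNet.ne

/-! Every left-Følner net tends to the filter of increasingly left-invariant finite sets, so it
suffices that `h(E)/|E|` converge along that filter, necessarily to its liminf `λ`; only the upper
bound needs work. Pick sets `K₁, …, Kₘ` with `h(Kⱼ) ≤ (λ + δ)|Kⱼ|`, each much more invariant than
the previous ones. A sufficiently invariant `F` is quasi-tiled in the manner of Ornstein and Weiss:
starting with the most invariant scale, greedily pack almost disjoint right translates `Kⱼ g` into
the part of `F` not yet covered. That part stays almost `Kⱼ`-invariant, so each scale covers the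
fraction `ε/2` of it, and after `m` scales at most `ε|F|` points remain. Right-subinvariance gives
`h(Kⱼ g) ≤ h(Kⱼ)`, and subadditivity yields `h(F) ≤ (M ε + (λ + δ)/(1 - ε))|F|`. -/

open Finset Topology
open scoped Pointwise

namespace OrnsteinWeiss

section EpsDisjoint

variable {S : Type*} [DecidableEq S]

/-- A counting substitute for the usual `ε`-disjointness (the members of `L` contain pairwise
disjoint subsets of relative size `1 - ε`); it is all that the quasi-tiling argument uses. -/
def IsEpsDisjoint (ε : ℝ) (L : Finset (Finset S)) : Prop :=
  (1 - ε) * ∑ A ∈ L, (#A : ℝ) ≤ #(L.biUnion id)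

lemma isEpsDisjoint_empty (ε : ℝ) : IsEpsDisjoint ε (∅ : Finset (Finset S)) := by
  simp [IsEpsDisjoint]

lemma IsEpsDisjoint.union {ε : ℝ} (hε : ε ≤ 1) {L₁ L₂ : Finset (Finset S)}
    (h₁ : IsEpsDisjoint ε L₁) (h₂ : IsEpsDisjoint ε L₂)
    (hd : Disjoint (L₁.biUnion id) (L₂.biUnion id)) : IsEpsDisjoint ε (L₁ ∪ L₂) := by
  have hsum : ∑ A ∈ L₁ ∪ L₂, (#A : ℝ) ≤ ∑ A ∈ L₁, (#A : ℝ) + ∑ A ∈ L₂, (#A : ℝ) := by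
    rw [← sum_union_inter]
    linarith [sum_nonneg fun A (_ : A ∈ L₁ ∩ L₂) => (Nat.cast_nonneg #A : (0 : ℝ) ≤ _)]
  unfold IsEpsDisjoint at *
  rw [union_biUnion, card_union_of_disjoint hd]
  push_cast
  nlinarith [mul_le_mul_of_nonneg_left hsum (sub_nonneg.2 hε)]

end EpsDisjoint

section Subadditive

variable {S : Type*} [DecidableEq S] {h : Finset S → ℝ}
  (H1 : ∀ A B : Finset S, h (A ∪ B) ≤ h A + h B)
include H1

lemma subadditive_nonneg (A : Finset S) : 0 ≤ h A := by
  simpa using H1 A A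

lemma subadditive_union_le {M : ℝ} (hM : ∀ s : S, h {s} ≤ M) (A B : Finset S) :
    h (A ∪ B) ≤ M * #A + h B := by
  induction A using Finset.induction_on with
  | empty => simp
  | insert a A ha ih =>
    rw [card_insert_of_notMem ha, insert_eq, union_assoc]
    push_cast
    linarith [H1 {a} (A ∪ B), hM a]

lemma subadditive_le_mul_card {M : ℝ} (hM : ∀ s : S, h {s} ≤ M) {A : Finset S}
    (hA : A.Nonempty) : h A ≤ M * #A := by
  obtain ⟨a, ha⟩ := hA
  have hcard : ((#(A.erase a) : ℕ) : ℝ) + 1 = #A := by exact_mod_cast card_erase_add_one ha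
  calc h A = h (A.erase a ∪ {a}) := by rw [union_comm, ← insert_eq, insert_erase ha]
    _ ≤ M * #(A.erase a) + h {a} := subadditive_union_le H1 hM _ _
    _ ≤ M * #A := by rw [← hcard]; linarith [hM a]

lemma subadditive_biUnion_le {L : Finset (Finset S)} (hL : L.Nonempty) :
    h (L.biUnion id) ≤ ∑ A ∈ L, h A := by
  induction hL using Finset.Nonempty.cons_induction with
  | singleton A => simp
  | cons A L hA _ ih =>
    rw [cons_eq_insert, biUnion_insert, sum_insert hA]
    exact (H1 _ _).trans (by simpa using ih)

lemma subadditive_le_of_isEpsDisjoint {M c ε : ℝ} (hM : ∀ s : S, h {s} ≤ M)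
    (hc : 0 ≤ c) (hε : ε < 1) {F : Finset S} {L : Finset (Finset S)} (hLne : L.Nonempty)
    (hLF : L.biUnion id ⊆ F) (hL : IsEpsDisjoint ε L) (hLc : ∀ A ∈ L, h A ≤ c * #A) :
    h F ≤ M * #(F \ L.biUnion id) + c / (1 - ε) * #F := by
  have hsum : ∑ A ∈ L, (#A : ℝ) ≤ #F / (1 - ε) := by
    rw [le_div_iff₀ (by linarith), mul_comm]
    exact hL.trans (by exact_mod_cast card_le_card hLF)
  calc h F = h ((F \ L.biUnion id) ∪ L.biUnion id) := by rw [sdiff_union_of_subset hLF]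
    _ ≤ M * #(F \ L.biUnion id) + h (L.biUnion id) := subadditive_union_le H1 hM _ _
    _ ≤ M * #(F \ L.biUnion id) + c * ∑ A ∈ L, (#A : ℝ) := by
        rw [mul_sum]
        linarith [subadditive_biUnion_le H1 hLne, sum_le_sum hLc]
    _ ≤ M * #(F \ L.biUnion id) + c / (1 - ε) * #F := by
        rw [div_mul_eq_mul_div, mul_div_assoc]
        linarith [mul_le_mul_of_nonneg_left hsum hc]

end Subadditive

section Translates

variable {S : Type*} [Mul S] [DecidableEq S]

def leftDefect (K E : Finset S) : ℕ := ∑ k ∈ K, #(E.image (k * ·) \ E)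

variable (S) in
/-- The filter of "increasingly left-invariant" nonempty finite sets: a net of nonempty finite
sets is a left-Følner net exactly when it tends to this filter. -/
noncomputable def folnerFilter : Filter (Finset S) :=
  𝓟 {E | E.Nonempty} ⊓ ⨅ s : S, comap (fun E => (#(E.image (s * ·) \ E) : ℝ) / #E) (𝓝 0)

lemma _root_.LeftFolnerNet.tendsto_folnerFilter (N : LeftFolnerNet S) :
    Tendsto N.F atTop (folnerFilter S) :=
  tendsto_inf.2 ⟨tendsto_principal.2 (Eventually.of_forall N.nonempty),
    tendsto_iInf.2 fun s => tendsto_comap_iff.2 (N.folner s)⟩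

lemma eventually_nonempty : ∀ᶠ E in folnerFilter S, E.Nonempty :=
  mem_inf_of_left (mem_principal_self _)

lemma eventually_leftDefect_le (K : Finset S) {η : ℝ} (hη : 0 < η) :
    ∀ᶠ E in folnerFilter S, (leftDefect K E : ℝ) ≤ η * #E := by
  have hK : Tendsto (fun E => ∑ k ∈ K, (#(E.image (k * ·) \ E) : ℝ) / #E) (folnerFilter S)
      (𝓝 0) := by
    have hk (k : S) : Tendsto (fun E => (#(E.image (k * ·) \ E) : ℝ) / #E) (folnerFilter S) (𝓝 0) :=
      tendsto_comap.mono_left (inf_le_right.trans (iInf_le _ k))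
    simpa using tendsto_finsetSum K fun k _ => hk k
  filter_upwards [hK.eventually_lt_const hη, eventually_nonempty] with E hE hne
  rw [← sum_div, div_lt_iff₀ (by simpa using hne)] at hE
  exact_mod_cast hE.le

def innerCenters (K E : Finset S) : Finset S := E.filter fun g => K.image (· * g) ⊆ E

lemma mul_eq_biUnion_image (K C : Finset S) : K * C = C.biUnion fun g => K.image (· * g) :=
  biUnion_image_right.symm

lemma exists_maximal_centers (K G : Finset S) (hK : K.Nonempty) {ε : ℝ} (hε : ε < 1) :
    ∃ C ⊆ G, (1 - ε) * (#C * #K) ≤ #(K * C) ∧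
      ∀ g ∈ G, (#(K.image (· * g) \ (K * C)) : ℝ) < (1 - ε) * #K := by
  set P : Finset S → Prop := fun C => (1 - ε) * (#C * #K) ≤ #(K * C)
  obtain ⟨C, hC, hmax⟩ := exists_max_image (G.powerset.filter P) card ⟨∅, by simp [P]⟩
  rw [mem_filter, mem_powerset] at hC
  have hKpos : 0 < (1 - ε) * #K := mul_pos (by linarith) (by exact_mod_cast hK.card_pos)
  refine ⟨C, hC.1, hC.2, fun g hg => lt_of_not_ge fun hge => ?_⟩
  have hgC : g ∉ C := fun hgC => by
    rw [sdiff_eq_empty_iff_subset.2 (image_subset_iff.2 fun k hk => mul_mem_mul hk hgC)] at hge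
    simp only [card_empty, Nat.cast_zero] at hge
    linarith
  have hPg : P (insert g C) := by
    have hcard : (#(K.image (· * g) \ (K * C)) : ℝ) + #(K * C) = #(K * insert g C) := by
      rw [mul_eq_biUnion_image K (insert g C), biUnion_insert, ← mul_eq_biUnion_image]
      exact_mod_cast card_sdiff_add_card _ _
    simp only [P, card_insert_of_notMem hgC, ← hcard]
    push_cast
    linarith [hC.2]
  have := hmax (insert g C) (mem_filter.2 ⟨mem_powerset.2 (insert_subset hg hC.1), hPg⟩)
  rw [card_insert_of_notMem hgC] at this
  omega

lemma exists_tower {P : Finset S → Prop}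
    (hP : ∃ᶠ E in folnerFilter S, P E) {η : ℝ} (hη : 0 < η) (m : ℕ) :
    ∃ Ks : List (Finset S), Ks.length = m ∧ (∀ K ∈ Ks, K.Nonempty ∧ P K) ∧
      Ks.Pairwise fun K K' => (leftDefect K' K : ℝ) ≤ η * #K := by
  induction m with
  | zero => exact ⟨[], rfl, by simp, List.Pairwise.nil⟩
  | succ m ih =>
    obtain ⟨Ks, hlen, hKs, hpair⟩ := ih
    have hinv : ∀ᶠ E in folnerFilter S, ∀ K ∈ Ks, (leftDefect K E : ℝ) ≤ η * #E :=
      (eventually_all_finite Ks.finite_toSet).2 fun K _ => eventually_leftDefect_le K hη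
    obtain ⟨E, hPE, hEne, hE⟩ := (hP.and_eventually (eventually_nonempty.and hinv)).exists
    exact ⟨E :: Ks, by simp [hlen], List.forall_mem_cons.2 ⟨⟨hEne, hPE⟩, hKs⟩,
      List.pairwise_cons.2 ⟨hE, hpair⟩⟩

end Translates

section LeftCancel

variable {S : Type*} [Mul S] [IsLeftCancelMul S] [DecidableEq S]

lemma card_filter_mul_notMem (k : S) (E : Finset S) :
    #(E.filter (k * · ∉ E)) = #(E.image (k * ·) \ E) := by
  have himage : (E.filter (k * · ∉ E)).image (k * ·) = E.image (k * ·) \ E := by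
    ext x
    simp only [mem_image, mem_filter, Finset.mem_sdiff]
    constructor
    · rintro ⟨g, ⟨hg, hgE⟩, rfl⟩
      exact ⟨⟨g, hg, rfl⟩, hgE⟩
    · rintro ⟨⟨g, hg, rfl⟩, hgE⟩
      exact ⟨g, ⟨hg, hgE⟩, rfl⟩
  rw [← himage, card_image_of_injective _ (mul_right_injective k)]

lemma card_le_card_innerCenters_add_leftDefect (K E : Finset S) :
    #E ≤ #(innerCenters K E) + leftDefect K E := by
  have hbad : E.filter (fun g => ¬ K.image (· * g) ⊆ E) ⊆
      K.biUnion fun k => E.filter (k * · ∉ E) := by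
    intro g hg
    obtain ⟨hgE, hKg⟩ := mem_filter.1 hg
    obtain ⟨_, hx, hxE⟩ := not_subset.1 hKg
    obtain ⟨k, hk, rfl⟩ := mem_image.1 hx
    exact mem_biUnion.2 ⟨k, hk, mem_filter.2 ⟨hgE, hxE⟩⟩
  calc #E = #(innerCenters K E) + #(E.filter fun g => ¬ K.image (· * g) ⊆ E) :=
        (card_filter_add_card_filter_not _).symm
    _ ≤ #(innerCenters K E) + ∑ k ∈ K, #(E.filter (k * · ∉ E)) :=
        Nat.add_le_add_left ((card_le_card hbad).trans card_biUnion_le) _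
    _ = #(innerCenters K E) + leftDefect K E := by
        simp only [leftDefect, card_filter_mul_notMem]

lemma leftDefect_sdiff_biUnion_le (K F : Finset S) (L : Finset (Finset S)) :
    leftDefect K (F \ L.biUnion id) ≤ leftDefect K F + ∑ A ∈ L, leftDefect K A := by
  simp only [leftDefect]
  rw [sum_comm, ← sum_add_distrib]
  refine sum_le_sum fun k _ => ?_
  set E := F \ L.biUnion id
  have hsub : E.image (k * ·) \ E ⊆
      (F.image (k * ·) \ F) ∪ L.biUnion fun A => A \ A.image (k * ·) := by
    intro x hx
    rw [Finset.mem_sdiff, mem_image] at hx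
    obtain ⟨⟨e, he, rfl⟩, hkeE⟩ := hx
    obtain ⟨heF, heL⟩ := Finset.mem_sdiff.1 he
    by_cases hkeF : k * e ∈ F
    · obtain ⟨A, hA, hkeA⟩ : ∃ A ∈ L, k * e ∈ A := by
        simpa [E, hkeF] using hkeE
      refine mem_union_right _ (mem_biUnion.2 ⟨A, hA, Finset.mem_sdiff.2 ⟨hkeA, fun hmem => ?_⟩⟩)
      obtain ⟨a, ha, hae⟩ := mem_image.1 hmem
      exact heL (mem_biUnion.2 ⟨A, hA, mul_left_cancel hae ▸ ha⟩)
    · exact mem_union_left _ (Finset.mem_sdiff.2 ⟨mem_image_of_mem _ heF, hkeF⟩)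
  calc #(E.image (k * ·) \ E)
      ≤ #(F.image (k * ·) \ F) + ∑ A ∈ L, #(A \ A.image (k * ·)) :=
        (card_le_card hsub).trans
          ((card_union_le _ _).trans (Nat.add_le_add_left card_biUnion_le _))
    _ = #(F.image (k * ·) \ F) + ∑ A ∈ L, #(A.image (k * ·) \ A) := by
        congr 1
        exact sum_congr rfl fun A _ =>
          card_sdiff_comm (card_image_of_injective _ (mul_right_injective k)).symm

lemma two_mul_leftDefect_sdiff_le {K F : Finset S} {L : Finset (Finset S)}
    {ε : ℝ} (hε0 : 0 < ε) (hLF : L.biUnion id ⊆ F) (hL : IsEpsDisjoint ε L)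
    (hFK : (leftDefect K F : ℝ) ≤ ε / 4 * #F)
    (hLK : ∀ A ∈ L, (leftDefect K A : ℝ) ≤ ε * (1 - ε) / 4 * #A)
    (hrem : ε * #F < #(F \ L.biUnion id)) :
    2 * (leftDefect K (F \ L.biUnion id) : ℝ) ≤ #(F \ L.biUnion id) := by
  have hsplit : (leftDefect K (F \ L.biUnion id) : ℝ) ≤
      leftDefect K F + ∑ A ∈ L, (leftDefect K A : ℝ) := by
    exact_mod_cast leftDefect_sdiff_biUnion_le K F L
  have hsum : ∑ A ∈ L, (leftDefect K A : ℝ) ≤ ε / 4 * ((1 - ε) * ∑ A ∈ L, (#A : ℝ)) := by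
    rw [mul_sum, mul_sum]
    exact sum_le_sum fun A hA => (hLK A hA).trans_eq (by ring)
  have hUF : (#(L.biUnion id) : ℝ) ≤ #F := by exact_mod_cast card_le_card hLF
  have := mul_le_mul_of_nonneg_left hL (by positivity : (0 : ℝ) ≤ ε / 4)
  nlinarith

end LeftCancel

section Cancel

variable {S : Type*} [Mul S] [IsCancelMul S] [DecidableEq S]

lemma sum_card_image_mul_right_inter_le (K G U : Finset S) :
    ∑ g ∈ G, #(K.image (· * g) ∩ U) ≤ #K * #U := by
  have hfiber (g : S) : #(K.image (· * g) ∩ U) = #(K.filter (· * g ∈ U)) := by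
    rw [← card_image_of_injective (K.filter (· * g ∈ U)) (mul_left_injective g)]
    congr 1
    ext x
    simp only [mem_inter, mem_image, mem_filter]
    constructor
    · rintro ⟨⟨k, hk, rfl⟩, hx⟩
      exact ⟨k, ⟨hk, hx⟩, rfl⟩
    · rintro ⟨k, ⟨hk, hx⟩, rfl⟩
      exact ⟨⟨k, hk, rfl⟩, hx⟩
  calc ∑ g ∈ G, #(K.image (· * g) ∩ U)
      = ∑ k ∈ K, #(G.filter (k * · ∈ U)) := by
        simp only [hfiber, card_filter]
        exact sum_comm
    _ ≤ ∑ _k ∈ K, #U := sum_le_sum fun k _ =>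
        card_le_card_of_injOn (k * ·) (fun g hg => (mem_filter.1 hg).2)
          (mul_right_injective k).injOn
    _ = #K * #U := by rw [sum_const, smul_eq_mul]

lemma exists_centers_cover (K E : Finset S) (hK : K.Nonempty) {ε : ℝ} (hε : ε < 1) :
    ∃ C ⊆ innerCenters K E, (1 - ε) * (#C * #K) ≤ #(K * C) ∧
      ε * #(innerCenters K E) ≤ #(K * C) := by
  obtain ⟨C, hCG, hC, hmax⟩ := exists_maximal_centers K (innerCenters K E) hK hε
  refine ⟨C, hCG, hC, ?_⟩
  have hKpos : (0 : ℝ) < #K := by exact_mod_cast hK.card_pos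
  have hlarge : ∀ g ∈ innerCenters K E, ε * #K ≤ #(K.image (· * g) ∩ (K * C)) := fun g hg => by
    have hsplit : (#(K.image (· * g) ∩ (K * C)) : ℝ) + #(K.image (· * g) \ (K * C)) = #K := by
      rw [← card_image_of_injective K (mul_left_injective g)]
      exact_mod_cast card_inter_add_card_sdiff _ _
    linarith [hmax g hg]
  have hcount : (∑ g ∈ innerCenters K E, #(K.image (· * g) ∩ (K * C)) : ℝ) ≤ #K * #(K * C) := by
    exact_mod_cast sum_card_image_mul_right_inter_le K (innerCenters K E) (K * C)
  have hsum := sum_le_sum hlarge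
  rw [sum_const, nsmul_eq_mul] at hsum
  nlinarith

lemma exists_epsDisjoint_cover (K E : Finset S) (hK : K.Nonempty) {ε : ℝ} (hε0 : 0 ≤ ε)
    (hε1 : ε < 1) (hE : 2 * (leftDefect K E : ℝ) ≤ #E) :
    ∃ T : Finset (Finset S), (∀ A ∈ T, ∃ g, A = K.image (· * g)) ∧ T.biUnion id ⊆ E ∧
      IsEpsDisjoint ε T ∧ (#(E \ T.biUnion id) : ℝ) ≤ (1 - ε / 2) * #E := by
  obtain ⟨C, hCE, hC, hcover⟩ := exists_centers_cover K E hK hε1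
  have hunion : (C.image fun g => K.image (· * g)).biUnion id = K * C :=
    image_biUnion.trans (mul_eq_biUnion_image K C).symm
  have hsub : K * C ⊆ E :=
    mul_subset_iff.2 fun k hk g hg => (mem_filter.1 (hCE hg)).2 (mem_image_of_mem _ hk)
  refine ⟨C.image fun g => K.image (· * g), fun A hA => ?_, hunion ▸ hsub, ?_, ?_⟩
  · obtain ⟨g, _, rfl⟩ := mem_image.1 hA
    exact ⟨g, rfl⟩
  · have hsum : ∑ A ∈ C.image (fun g => K.image (· * g)), (#A : ℝ) ≤ #C * #K := by
      refine (sum_image_le_of_nonneg fun _ _ => Nat.cast_nonneg _).trans_eq ?_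
      simp [card_image_of_injective _ (mul_left_injective _)]
    unfold IsEpsDisjoint
    rw [hunion]
    nlinarith
  · rw [hunion]
    have hrem : (#(E \ (K * C)) : ℝ) + #(K * C) = #E := by
      exact_mod_cast card_sdiff_add_card_eq_card hsub
    have hinner : (#E : ℝ) ≤ #(innerCenters K E) + leftDefect K E := by
      exact_mod_cast card_le_card_innerCenters_add_leftDefect K E
    nlinarith

end Cancel

section RightCancel

variable {S : Type*} [Semigroup S] [IsRightCancelMul S] [DecidableEq S]

lemma leftDefect_image_mul_right (K A : Finset S) (g : S) :
    leftDefect K (A.image (· * g)) = leftDefect K A := by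
  refine sum_congr rfl fun k _ => ?_
  have hcomm : (A.image (· * g)).image (k * ·) = (A.image (k * ·)).image (· * g) := by
    simp only [image_image, Function.comp_def, mul_assoc]
  rw [hcomm, ← image_sdiff _ _ (mul_left_injective g),
    card_image_of_injective _ (mul_left_injective g)]

end RightCancel

section Tiling

variable {S : Type*} [Semigroup S] [IsCancelMul S] [DecidableEq S]

/-- The scales `Ks` are used in list order, each on the part of `F` still uncovered, so `hpair`
asks every scale to be almost invariant under all later ones. -/
lemma exists_quasiTiling {ε : ℝ} (hε0 : 0 < ε) (hε1 : ε < 1) (F : Finset S)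
    (Ks : List (Finset S)) (hne : ∀ K ∈ Ks, K.Nonempty)
    (hpair : Ks.Pairwise fun K K' => (leftDefect K' K : ℝ) ≤ ε * (1 - ε) / 4 * #K)
    (hF : ∀ K ∈ Ks, (leftDefect K F : ℝ) ≤ ε / 4 * #F)
    (L : Finset (Finset S)) (hLF : L.biUnion id ⊆ F) (hL : IsEpsDisjoint ε L)
    (hLK : ∀ A ∈ L, ∀ K ∈ Ks, (leftDefect K A : ℝ) ≤ ε * (1 - ε) / 4 * #A) :
    ∃ L' : Finset (Finset S), (∀ A ∈ L', A ∈ L ∨ ∃ K ∈ Ks, ∃ g, A = K.image (· * g)) ∧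
      L'.biUnion id ⊆ F ∧ IsEpsDisjoint ε L' ∧
      (#(F \ L'.biUnion id) : ℝ) ≤
        max (ε * #F) ((1 - ε / 2) ^ Ks.length * #(F \ L.biUnion id)) := by
  induction Ks generalizing L with
  | nil => exact ⟨L, fun A hA => Or.inl hA, hLF, hL, by simp⟩
  | cons K Ks ih =>
    rw [List.pairwise_cons] at hpair
    by_cases hstop : (#(F \ L.biUnion id) : ℝ) ≤ ε * #F
    · exact ⟨L, fun A hA => Or.inl hA, hLF, hL, hstop.trans (le_max_left _ _)⟩
    obtain ⟨T, hTK, hTE, hT, hTrem⟩ := exists_epsDisjoint_cover K (F \ L.biUnion id)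
      (hne K List.mem_cons_self) hε0.le hε1 (two_mul_leftDefect_sdiff_le hε0 hLF hL
        (hF K List.mem_cons_self) (fun A hA => hLK A hA K List.mem_cons_self) (not_le.1 hstop))
    have hTK' : ∀ A ∈ T, ∀ K' ∈ Ks, (leftDefect K' A : ℝ) ≤ ε * (1 - ε) / 4 * #A := by
      intro A hA K' hK'
      obtain ⟨g, rfl⟩ := hTK A hA
      rw [leftDefect_image_mul_right, card_image_of_injective _ (mul_left_injective g)]
      exact hpair.1 K' hK'
    obtain ⟨L', hL'tiles, hL'F, hL', hL'rem⟩ := ih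
      (fun K' hK' => hne K' (List.mem_cons_of_mem _ hK')) hpair.2
      (fun K' hK' => hF K' (List.mem_cons_of_mem _ hK')) (L ∪ T)
      (by rw [union_biUnion]; exact union_subset hLF (hTE.trans sdiff_subset))
      (hL.union hε1.le hT (disjoint_of_subset_right hTE disjoint_sdiff))
      (fun A hA K' hK' => (mem_union.1 hA).elim
        (fun hA => hLK A hA K' (List.mem_cons_of_mem _ hK')) (fun hA => hTK' A hA K' hK'))
    refine ⟨L', fun A hA => ?_, hL'F, hL', hL'rem.trans (max_le_max le_rfl ?_)⟩
    · rcases hL'tiles A hA with hA | ⟨K', hK', g, rfl⟩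
      · rcases mem_union.1 hA with hA | hA
        · exact Or.inl hA
        · obtain ⟨g, rfl⟩ := hTK A hA
          exact Or.inr ⟨K, List.mem_cons_self, g, rfl⟩
      · exact Or.inr ⟨K', List.mem_cons_of_mem _ hK', g, rfl⟩
    · rw [union_biUnion, sdiff_union_distrib, ← Finset.sdiff_sdiff_left', List.length_cons,
        pow_succ, mul_assoc]
      exact mul_le_mul_of_nonneg_left hTrem (pow_nonneg (by linarith) _)

end Tiling

lemma exists_mul_add_div_one_sub_lt (M : ℝ) {c a : ℝ} (hca : c < a) :
    ∃ ε : ℝ, 0 < ε ∧ ε < 1 ∧ M * ε + c / (1 - ε) < a := by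
  have hcont : ContinuousAt (fun ε : ℝ => M * ε + c / (1 - ε)) 0 := by
    fun_prop (disch := norm_num)
  have hlim : Tendsto (fun ε : ℝ => M * ε + c / (1 - ε)) (𝓝[>] 0) (𝓝 c) := by
    simpa using hcont.tendsto.mono_left nhdsWithin_le_nhds
  have hpos : ∀ᶠ ε in 𝓝[>] (0 : ℝ), 0 < ε := self_mem_nhdsWithin
  have hlt : ∀ᶠ ε in 𝓝[>] (0 : ℝ), ε < 1 := nhdsWithin_le_nhds (gt_mem_nhds one_pos)
  obtain ⟨ε, hεa, hε0, hε1⟩ := ((hlim.eventually (gt_mem_nhds hca)).and (hpos.and hlt)).exists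
  exact ⟨ε, hε0, hε1, hεa⟩

section Main

variable {S : Type*} [Semigroup S] [IsCancelMul S] [DecidableEq S] {h : Finset S → ℝ}
  (H1 : ∀ A B : Finset S, h (A ∪ B) ≤ h A + h B)
  (H2 : ∀ (s : S) (A : Finset S), h (A.image (· * s)) ≤ h A)
include H1 H2

theorem eventually_le_mul_card_of_frequently_le {M c ε : ℝ} (hM0 : 0 ≤ M) (hM : ∀ s : S, h {s} ≤ M)
    (hc : 0 ≤ c) (hε0 : 0 < ε) (hε1 : ε < 1)
    (hfreq : ∃ᶠ E in folnerFilter S, h E ≤ c * #E) :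
    ∀ᶠ F in folnerFilter S, h F ≤ (M * ε + c / (1 - ε)) * #F := by
  obtain ⟨m, hm⟩ := exists_pow_lt_of_lt_one hε0 (by linarith : 1 - ε / 2 < 1)
  obtain ⟨Ks, rfl, hKs, hpair⟩ :=
    exists_tower hfreq (by nlinarith : 0 < ε * (1 - ε) / 4) m
  have hinv : ∀ᶠ F in folnerFilter S, ∀ K ∈ Ks, (leftDefect K F : ℝ) ≤ ε / 4 * #F :=
    (eventually_all_finite Ks.finite_toSet).2 fun K _ => eventually_leftDefect_le K (by positivity)
  filter_upwards [hinv, eventually_nonempty] with F hF hFne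
  obtain ⟨L, hLK, hLF, hL, hrem⟩ := exists_quasiTiling hε0 hε1 F Ks (fun K hK => (hKs K hK).1)
    hpair hF ∅ (by simp) (isEpsDisjoint_empty ε) (by simp)
  have hFpos : (0 : ℝ) < #F := by exact_mod_cast hFne.card_pos
  have hrem' : (#(F \ L.biUnion id) : ℝ) ≤ ε * #F := by
    refine hrem.trans (max_le le_rfl ?_)
    simpa using mul_le_mul_of_nonneg_right hm.le hFpos.le
  have hLne : L.Nonempty := by
    rw [nonempty_iff_ne_empty]
    rintro rfl
    simp only [biUnion_empty, sdiff_empty] at hrem'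
    nlinarith
  have hLc : ∀ A ∈ L, h A ≤ c * #A := by
    intro A hA
    obtain ⟨K, hK, g, rfl⟩ := (hLK A hA).resolve_left (notMem_empty A)
    rw [card_image_of_injective _ (mul_left_injective g)]
    exact (H2 g K).trans (hKs K hK).2
  calc h F ≤ M * #(F \ L.biUnion id) + c / (1 - ε) * #F :=
        subadditive_le_of_isEpsDisjoint H1 hM hc hε1 hLne hLF hL hLc
    _ ≤ (M * ε + c / (1 - ε)) * #F := by nlinarith [mul_le_mul_of_nonneg_left hrem' hM0]

theorem tendsto_div_card_folnerFilter [(folnerFilter S).NeBot] {M : ℝ} (hM0 : 0 ≤ M)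
    (hM : ∀ s : S, h {s} ≤ M) :
    Tendsto (fun E => h E / #E) (folnerFilter S)
      (𝓝 (liminf (fun E => h E / #E) (folnerFilter S))) := by
  have hbounds : ∀ᶠ E in folnerFilter S, 0 ≤ h E / #E ∧ h E / #E ≤ M :=
    eventually_nonempty.mono fun E hE => by
      have hpos : (0 : ℝ) < #E := by exact_mod_cast hE.card_pos
      exact ⟨div_nonneg (subadditive_nonneg H1 E) hpos.le,
        (div_le_iff₀ hpos).2 (subadditive_le_mul_card H1 hM hE)⟩
  have hbdd : IsBoundedUnder (· ≥ ·) (folnerFilter S) fun E => h E / #E :=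
    isBoundedUnder_of_eventually_ge (hbounds.mono fun _ => And.left)
  have hcobdd : IsCoboundedUnder (· ≥ ·) (folnerFilter S) fun E => h E / #E :=
    (isBoundedUnder_of_eventually_le (hbounds.mono fun _ => And.right)).isCoboundedUnder_flip
  refine tendsto_order.2 ⟨fun a ha => eventually_lt_of_lt_liminf ha hbdd, fun a ha => ?_⟩
  obtain ⟨c, hlc, hca⟩ := exists_between ha
  have hc : 0 ≤ c := (le_liminf_of_le hcobdd (hbounds.mono fun _ => And.left)).trans hlc.le
  have hfreq : ∃ᶠ E in folnerFilter S, h E ≤ c * #E :=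
    ((frequently_lt_of_liminf_lt hcobdd hlc).and_eventually eventually_nonempty).mono
      fun E ⟨hE, hne⟩ => ((div_lt_iff₀ (by exact_mod_cast hne.card_pos)).1 hE).le
  obtain ⟨ε, hε0, hε1, hεa⟩ := exists_mul_add_div_one_sub_lt M hca
  filter_upwards [eventually_le_mul_card_of_frequently_le H1 H2 hM0 hM hc hε0 hε1 hfreq,
    eventually_nonempty] with E hE hne
  exact ((div_le_iff₀ (by exact_mod_cast hne.card_pos)).2 hE).trans_lt hεa

end Main

end OrnsteinWeiss

theorem ornstein_weiss_lemma.{u, v, w} {S : Type u} [Semigroup S] [IsCancelMul S]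
    [DecidableEq S]
    (hamen : Nonempty (LeftFolnerNet.{u, v} S))
    (h : Finset S → ℝ)
    (H1 : ∀ A B : Finset S, h (A ∪ B) ≤ h A + h B)
    (H2 : ∀ (s : S) (A : Finset S), h (A.image (· * s)) ≤ h A)
    (H3 : ∃ M : ℝ, 0 ≤ M ∧ ∀ s : S, h {s} ≤ M) :
    ∃ lam : ℝ, 0 ≤ lam ∧
      ∀ N : LeftFolnerNet.{u, w} S,
        Filter.Tendsto (fun i => h (N.F i) / ((N.F i).card : ℝ))
          Filter.atTop (nhds lam) := by
  obtain ⟨M, hM0, hM⟩ := H3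
  obtain ⟨N₀⟩ := hamen
  have := N₀.dir
  have := N₀.tendsto_folnerFilter.neBot
  have hlim := OrnsteinWeiss.tendsto_div_card_folnerFilter H1 H2 hM0 hM
  refine ⟨_, ge_of_tendsto' hlim fun E => ?_, fun N => hlim.comp N.tendsto_folnerFilter⟩
  exact div_nonneg (OrnsteinWeiss.subadditive_nonneg H1 E) (Nat.cast_nonneg _)
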